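/- Let r be a strictly positive C¹ function on (0, c₀] with liminf_{s→0⁺} r(s) > 0 and lim_{s→0⁺} s r'(s)/r(s) = 0. Then there is a constant C₂ > 0 such that for all δ > 0 and all ζ ∈ (0, c₀), the second derivative of Φ_δ(ζ) = exp(∫₀^ζ ds/(s r(s)+δ)) satisfies Φ_δ''(ζ) ≤ C₂ Φ_δ(ζ) r(ζ) / (ζ r(ζ) + δ)². -/

import Mathlib

/-!
Since `Φ_δ' = Φ_δ · g` with `g = 1 / (s r + δ)`, one gets
`Φ_δ'' = Φ_δ (g² + g') = Φ_δ (1 - r - ζ r') / (ζ r + δ)²`, so it suffices to bound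
`(1 - r - ζ r') / r` from above on `(0, c₀)`, uniformly in `δ`. Near `0` this quotient is
`1/r - 1 - ζ r'/r < 2/L` with `L = liminf r`, and on `[ε, c₀]` it is continuous, hence bounded.
-/

open MeasureTheory Set Filter Topology

theorem ContinuousOn.exists_le_on_Ioc_of_eventually_le {f : ℝ → ℝ} {a b K : ℝ}
    (hf : ContinuousOn f (Ioc a b)) (hK : ∀ᶠ x in 𝓝[>] a, f x ≤ K) :
    ∃ C, ∀ x ∈ Ioc a b, f x ≤ C := by
  obtain ⟨ε, hε, hεK⟩ := mem_nhdsGT_iff_exists_Ioc_subset.1 hK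
  have hsub : Icc ε b ⊆ Ioc a b := fun x hx => ⟨lt_of_lt_of_le hε hx.1, hx.2⟩
  obtain ⟨M, hM⟩ := isCompact_Icc.bddAbove_image (hf.mono hsub)
  refine ⟨max K M, fun x hx => ?_⟩
  rcases le_total x ε with hxε | hεx
  · exact le_max_of_le_left (hεK ⟨hx.1, hxε⟩)
  · exact le_max_of_le_right (hM (mem_image_of_mem f ⟨hεx, hx.2⟩))

theorem eventually_one_sub_sub_mul_deriv_div_le {r : ℝ → ℝ}
    (hbdd : IsBoundedUnder (· ≥ ·) (𝓝[>] 0) r) (hliminf : 0 < liminf r (𝓝[>] 0))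
    (hratio : Tendsto (fun s => s * deriv r s / r s) (𝓝[>] 0) (𝓝 0)) :
    ∀ᶠ s in 𝓝[>] (0:ℝ), (1 - r s - s * deriv r s) / r s ≤ 2 / liminf r (𝓝[>] 0) := by
  set L := liminf r (𝓝[>] 0)
  have hr : ∀ᶠ s in 𝓝[>] 0, L / 2 < r s :=
    eventually_lt_of_lt_liminf (half_lt_self hliminf) hbdd
  have hq : ∀ᶠ s in 𝓝[>] 0, -1 < s * deriv r s / r s :=
    hratio.eventually (lt_mem_nhds (by norm_num))
  filter_upwards [hr, hq] with s hrs hqs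
  have hrs0 : 0 < r s := by linarith
  have hinv : 1 / r s < 2 / L := by
    rw [div_lt_div_iff₀ hrs0 hliminf]
    linarith
  calc (1 - r s - s * deriv r s) / r s = 1 / r s - 1 - s * deriv r s / r s := by
        field_simp
    _ ≤ 2 / L := by linarith

theorem exists_one_sub_sub_mul_deriv_le_mul {c₀ : ℝ} (hc₀ : 0 < c₀) {r : ℝ → ℝ}
    (hrpos : ∀ s ∈ Ioc (0:ℝ) c₀, 0 < r s) (hrC1 : ContDiffOn ℝ 1 r (Ioc 0 c₀))
    (hliminf : 0 < liminf r (𝓝[>] 0))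
    (hratio : Tendsto (fun s => s * deriv r s / r s) (𝓝[>] 0) (𝓝 0)) :
    ∃ C > 0, ∀ ζ ∈ Ioo (0:ℝ) c₀, 1 - r ζ - ζ * deriv r ζ ≤ C * r ζ := by
  have hIoo : Ioo (0:ℝ) c₀ ∈ 𝓝[>] 0 := Ioo_mem_nhdsGT hc₀
  have hbdd : IsBoundedUnder (· ≥ ·) (𝓝[>] 0) r :=
    isBoundedUnder_of_eventually_ge
      (mem_of_superset hIoo fun s hs => (hrpos s (Ioo_subset_Ioc_self hs)).le)
  have hderiv : ∀ s ∈ Ioo (0:ℝ) c₀, derivWithin r (Ioc 0 c₀) s = deriv r s := fun s hs =>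
    derivWithin_of_mem_nhds (Ioc_mem_nhds hs.1 hs.2)
  -- `derivWithin` rather than `deriv`, to have continuity up to `c₀`
  set ψ := fun s => (1 - r s - s * derivWithin r (Ioc 0 c₀) s) / r s
  have hψ : ContinuousOn ψ (Ioc 0 c₀) :=
    ((continuousOn_const.sub hrC1.continuousOn).sub (continuousOn_id.mul
      (hrC1.continuousOn_derivWithin (uniqueDiffOn_Ioc 0 c₀) le_rfl))).div
      hrC1.continuousOn fun s hs => (hrpos s hs).ne'
  have hψ0 : ∀ᶠ s in 𝓝[>] 0, ψ s ≤ 2 / liminf r (𝓝[>] 0) := by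
    filter_upwards [eventually_one_sub_sub_mul_deriv_div_le hbdd hliminf hratio, hIoo]
      with s hs hsIoo
    simpa only [ψ, hderiv s hsIoo] using hs
  obtain ⟨C, hC⟩ := hψ.exists_le_on_Ioc_of_eventually_le hψ0
  refine ⟨max C 1, one_pos.trans_le (le_max_right _ _), fun ζ hζ => ?_⟩
  have hrζ := hrpos ζ (Ioo_subset_Ioc_self hζ)
  have h := (hC ζ (Ioo_subset_Ioc_self hζ)).trans (le_max_left C 1)
  rwa [div_le_iff₀ hrζ, hderiv ζ hζ] at h

theorem hasDerivAt_setIntegral_Ioc {g : ℝ → ℝ} {a b x : ℝ} (hint : IntegrableOn g (Ioc a b))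
    (hcont : ContinuousOn g (Ioc a b)) (hx : x ∈ Ioo a b) :
    HasDerivAt (fun z => ∫ s in Ioc a z, g s) (g x) x := by
  have hmem : Ioc a b ∈ 𝓝 x := Ioc_mem_nhds hx.1 hx.2
  have hFTC : HasDerivAt (fun z => ∫ s in a..z, g s) (g x) x :=
    intervalIntegral.integral_hasDerivAt_right
      ((intervalIntegrable_iff_integrableOn_Ioc_of_le hx.1.le).2
        (hint.mono_set (Ioc_subset_Ioc_right hx.2.le)))
      ⟨Ioc a b, hmem, hcont.aestronglyMeasurable measurableSet_Ioc⟩ (hcont.continuousAt hmem)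
  refine hFTC.congr_of_eventuallyEq ?_
  filter_upwards [Ioi_mem_nhds hx.1] with z hz
  exact (intervalIntegral.integral_of_le hz.le).symm

theorem deriv_deriv_exp_comp {F g : ℝ → ℝ} {x g' : ℝ}
    (hF : ∀ᶠ z in 𝓝 x, HasDerivAt F (g z) z) (hg : HasDerivAt g g' x) :
    deriv (deriv fun z => Real.exp (F z)) x = Real.exp (F x) * (g x ^ 2 + g') := by
  have h : deriv (fun z => Real.exp (F z)) =ᶠ[𝓝 x] fun z => Real.exp (F z) * g z :=
    hF.mono fun z hz => hz.exp.deriv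
  rw [h.deriv_eq]
  exact (hF.self_of_nhds.exp.mul hg).deriv.trans (by ring)

section

variable {r : ℝ → ℝ} {c δ : ℝ}

theorem continuousOn_one_div_mul_add (hδ : 0 < δ) (hr : ContinuousOn r (Ioc 0 c))
    (hrnn : ∀ s ∈ Ioc 0 c, 0 ≤ r s) :
    ContinuousOn (fun s => 1 / (s * r s + δ)) (Ioc 0 c) :=
  continuousOn_const.div ((continuousOn_id.mul hr).add continuousOn_const) fun s hs =>
    (add_pos_of_nonneg_of_pos (mul_nonneg hs.1.le (hrnn s hs)) hδ).ne'

theorem integrableOn_one_div_mul_add (hδ : 0 < δ) (hr : ContinuousOn r (Ioc 0 c))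
    (hrnn : ∀ s ∈ Ioc 0 c, 0 ≤ r s) :
    IntegrableOn (fun s => 1 / (s * r s + δ)) (Ioc 0 c) := by
  refine ⟨(continuousOn_one_div_mul_add hδ hr hrnn).aestronglyMeasurable measurableSet_Ioc,
    HasFiniteIntegral.restrict_of_bounded (C := 1 / δ) measure_Ioc_lt_top ?_⟩
  refine (ae_restrict_iff' measurableSet_Ioc).2 (ae_of_all _ fun s hs => ?_)
  have hδle : δ ≤ s * r s + δ := le_add_of_nonneg_left (mul_nonneg hs.1.le (hrnn s hs))
  rw [Real.norm_of_nonneg (one_div_nonneg.2 (hδ.le.trans hδle))]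
  exact one_div_le_one_div_of_le hδ hδle

end

theorem stmt_6 (c₀ : ℝ) (hc₀ : 0 < c₀) (r : ℝ → ℝ)
    (hrpos : ∀ s ∈ Ioc (0:ℝ) c₀, 0 < r s)
    (hrC1 : ContDiffOn ℝ 1 r (Ioc 0 c₀))
    (hliminf : 0 < Filter.liminf r (nhdsWithin 0 (Ioi 0)))
    (hratio : Tendsto (fun s => s * deriv r s / r s) (nhdsWithin 0 (Ioi 0)) (nhds 0)) :
    ∃ C₂ > (0:ℝ), ∀ δ > (0:ℝ), ∀ ζ ∈ Ioo (0:ℝ) c₀,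
      deriv (deriv (fun z => Real.exp (∫ s in Ioc (0:ℝ) z, 1 / (s * r s + δ)))) ζ
        ≤ C₂ * Real.exp (∫ s in Ioc (0:ℝ) ζ, 1 / (s * r s + δ)) * r ζ
            / (ζ * r ζ + δ) ^ 2 := by
  obtain ⟨C, hC, hbound⟩ := exists_one_sub_sub_mul_deriv_le_mul hc₀ hrpos hrC1 hliminf hratio
  refine ⟨C, hC, fun δ hδ ζ hζ => ?_⟩
  have hrnn : ∀ s ∈ Ioc 0 c₀, 0 ≤ r s := fun s hs => (hrpos s hs).le
  have hF : ∀ᶠ z in 𝓝 ζ, HasDerivAt (fun z => ∫ s in Ioc 0 z, 1 / (s * r s + δ))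
      (1 / (z * r z + δ)) z := by
    filter_upwards [Ioo_mem_nhds hζ.1 hζ.2] with z hz
    exact hasDerivAt_setIntegral_Ioc (integrableOn_one_div_mul_add hδ hrC1.continuousOn hrnn)
      (continuousOn_one_div_mul_add hδ hrC1.continuousOn hrnn) hz
  have hr' : HasDerivAt r (deriv r ζ) ζ :=
    ((hrC1.contDiffAt (Ioc_mem_nhds hζ.1 hζ.2)).differentiableAt one_ne_zero).hasDerivAt
  have hh : 0 < ζ * r ζ + δ := add_pos (mul_pos hζ.1 (hrpos ζ (Ioo_subset_Ioc_self hζ))) hδ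
  have hg := (hasDerivAt_const ζ (1:ℝ)).div (((hasDerivAt_id ζ).mul hr').add_const δ) hh.ne'
  rw [deriv_deriv_exp_comp hF hg]
  set E := Real.exp (∫ s in Ioc 0 ζ, 1 / (s * r s + δ))
  calc E * ((1 / (ζ * r ζ + δ)) ^ 2 + (0 * (ζ * r ζ + δ) - 1 * (1 * r ζ + ζ * deriv r ζ))
        / (ζ * r ζ + δ) ^ 2)
      = E * (1 - r ζ - ζ * deriv r ζ) / (ζ * r ζ + δ) ^ 2 := by
        field_simp
        ring
    _ ≤ E * (C * r ζ) / (ζ * r ζ + δ) ^ 2 := by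
        gcongr
        exact hbound ζ hζ
    _ = C * E * r ζ / (ζ * r ζ + δ) ^ 2 := by ring
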